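/- arXiv:1009.5760 — 5 statements merged into one kernel-verified Lean document; each statement's English description precedes it below -/
import Mathlib

section
/- Let Σ ≻ 0 and Σ_wz ≻ 0 be symmetric n×n matrices and μ > 0. If a symmetric matrix T satisfies T⁻¹ = (μ/(1+μ)) Σ⁻¹ + (1/(1+μ)) (Σ + Σ_wz)⁻¹ with T ≻ 0, then Σ ≺ T ≺ Σ + Σ_wz; in particular the matrix Σ_w̃ := T − Σ satisfies 0 ≺ Σ_w̃ ≺ Σ_wz. -/
/-!
Inversion is strictly antitone on positive definite matrices: if `A ≻ 0` and `B - A ≻ 0`, then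
`A⁻¹ - B⁻¹ = B⁻¹ (D + D A⁻¹ D) B⁻¹` with `D = B - A` is a congruence of a positive definite
matrix. Since `S⁻¹ ≻ (S + Swz)⁻¹` and `T⁻¹` is a convex combination of the two with positive
weights, `S⁻¹ ≻ T⁻¹ ≻ (S + Swz)⁻¹`, and inverting once more gives `S ≺ T ≺ S + Swz`.
-/

open Matrix

namespace Matrix.PosDef

open scoped ComplexOrder

variable {n 𝕜 : Type*} [Fintype n] [DecidableEq n] [RCLike 𝕜] {A B : Matrix n n 𝕜}

theorem inv_sub_inv (hA : A.PosDef) (hAB : (B - A).PosDef) : (A⁻¹ - B⁻¹).PosDef := by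
  set D := B - A with hD
  have hB : B.PosDef := by simpa [D] using hA.add hAB
  have hunits : IsUnit A ↔ IsUnit B := iff_of_true hA.isUnit hB.isUnit
  have key : A⁻¹ - B⁻¹ = star B⁻¹ * (D + D * A⁻¹ * D) * B⁻¹ :=
    calc A⁻¹ - B⁻¹ = B⁻¹ * D * A⁻¹ := by
          rw [← neg_sub, Matrix.inv_sub_inv hunits.symm, hD]; noncomm_ring
      _ = B⁻¹ * D * (B⁻¹ + (A⁻¹ - B⁻¹)) := by rw [add_sub_cancel]
      _ = B⁻¹ * D * (B⁻¹ + A⁻¹ * D * B⁻¹) := by rw [Matrix.inv_sub_inv hunits]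
      _ = star B⁻¹ * (D + D * A⁻¹ * D) * B⁻¹ := by
          rw [star_eq_conjTranspose, hB.inv.1.eq]; noncomm_ring
  have hinner : (D + D * A⁻¹ * D).PosDef := by
    simpa only [hAB.1.eq] using hAB.add_posSemidef (hA.inv.posSemidef.conjTranspose_mul_mul_same D)
  rw [key]
  exact (IsUnit.posDef_star_left_conjugate_iff hB.inv.isUnit).mpr hinner

theorem sub_of_inv_sub_inv (hB : B.PosDef) (h : (A⁻¹ - B⁻¹).PosDef) : (B - A).PosDef := by
  have hA : A.PosDef := posDef_inv_iff.mp (by simpa using hB.inv.add h)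
  have hBA := hB.inv.inv_sub_inv (B := A⁻¹) (by simpa using h)
  rwa [nonsing_inv_nonsing_inv _ ((isUnit_iff_isUnit_det _).mp hA.isUnit),
    nonsing_inv_nonsing_inv _ ((isUnit_iff_isUnit_det _).mp hB.isUnit)] at hBA

end Matrix.PosDef

theorem enhanced_noise_strictly_between {n : ℕ}
    (S Swz T : Matrix (Fin n) (Fin n) ℝ) (μ : ℝ)
    (hS : S.PosDef) (hwz : Swz.PosDef) (hT : T.PosDef) (hμ : 0 < μ)
    (hdef : T⁻¹ = (μ / (1 + μ)) • S⁻¹ + (1 / (1 + μ)) • (S + Swz)⁻¹) :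
    (T - S).PosDef ∧ ((S + Swz) - T).PosDef := by
  have hμ₁ : 0 < 1 + μ := by positivity
  have hgap : (S⁻¹ - (S + Swz)⁻¹).PosDef := hS.inv_sub_inv (by simpa using hwz)
  refine ⟨hT.sub_of_inv_sub_inv ?_, (hS.add hwz).sub_of_inv_sub_inv ?_⟩
  · have hsplit : S⁻¹ - T⁻¹ = (1 / (1 + μ)) • (S⁻¹ - (S + Swz)⁻¹) := by
      rw [hdef]; match_scalars <;> field_simp; ring
    exact hsplit ▸ hgap.smul (one_div_pos.mpr hμ₁)
  · have hsplit : T⁻¹ - (S + Swz)⁻¹ = (μ / (1 + μ)) • (S⁻¹ - (S + Swz)⁻¹) := by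
      rw [hdef]; match_scalars <;> field_simp; ring
    exact hsplit ▸ hgap.smul (div_pos hμ hμ₁)
end

section
/- Let Σ_x ≻ 0, Σ* with 0 ≺ Σ* ⪯ Σ_x, Σ_wy ≻ 0, Σ_w̃ ≻ 0 be symmetric n×n matrices, and let M ⪰ 0 satisfy M(Σ_x − Σ*) = 0 and (Σ* + Σ_w̃)⁻¹ = (Σ* + Σ_wy)⁻¹ + M. Then (Σ_x + Σ_w̃)(Σ* + Σ_w̃)⁻¹ = (Σ_x + Σ_wy)(Σ* + Σ_wy)⁻¹. -/
/-! Writing `Σ_x + Σ_w = (Σ_x - Σ*) + (Σ* + Σ_w)`, each side equals `1 + (Σ_x - Σ*)(Σ* + Σ_w)⁻¹`,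
and the two inverses differ by `M`, which `Σ_x - Σ*` annihilates from the left because both
matrices are symmetric and `M (Σ_x - Σ*) = 0`. -/

open Matrix

namespace Matrix

variable {n R : Type*} [Fintype n]

theorem mul_eq_zero_of_isHermitian_of_mul_eq_zero [NonUnitalSemiring R] [StarRing R]
    {A B : Matrix n n R} (hA : A.IsHermitian) (hB : B.IsHermitian) (h : B * A = 0) :
    A * B = 0 := by
  simpa only [conjTranspose_mul, hA.eq, hB.eq, conjTranspose_zero] using congrArg conjTranspose h

theorem add_mul_nonsing_inv_eq_of_nonsing_inv_eq_add [DecidableEq n] [CommRing R]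
    {D A B M : Matrix n n R} (hA : IsUnit A.det) (hB : IsUnit B.det)
    (hDM : D * M = 0) (hinv : B⁻¹ = A⁻¹ + M) :
    (D + B) * B⁻¹ = (D + A) * A⁻¹ := by
  rw [add_mul, add_mul, mul_nonsing_inv B hB, mul_nonsing_inv A hA, hinv, mul_add, hDM, add_zero]

end Matrix

theorem rate_preservation_identity_general {n : ℕ}
    (Sx Ss Swy Swt M : Matrix (Fin n) (Fin n) ℝ)
    (hSs : Ss.PosDef) (hle : (Sx - Ss).PosSemidef)
    (hwy : Swy.PosDef) (hwt : Swt.PosDef) (hM : M.PosSemidef)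
    (hMc : M * (Sx - Ss) = 0)
    (henh : (Ss + Swt)⁻¹ = (Ss + Swy)⁻¹ + M) :
    (Sx + Swt) * (Ss + Swt)⁻¹ = (Sx + Swy) * (Ss + Swy)⁻¹ := by
  have hDM : (Sx - Ss) * M = 0 :=
    mul_eq_zero_of_isHermitian_of_mul_eq_zero hle.isHermitian hM.isHermitian hMc
  have key := add_mul_nonsing_inv_eq_of_nonsing_inv_eq_add (hSs.add hwy).det_pos.ne'.isUnit
    (hSs.add hwt).det_pos.ne'.isUnit hDM henh
  have hsplit (W : Matrix (Fin n) (Fin n) ℝ) : Sx - Ss + (Ss + W) = Sx + W := by abel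
  rwa [hsplit, hsplit] at key

theorem rate_preservation_identity {n : ℕ}
    (Sx Ss Swy Swt M : Matrix (Fin n) (Fin n) ℝ)
    (hSx : Sx.PosDef) (hSs : Ss.PosDef) (hle : (Sx - Ss).PosSemidef)
    (hwy : Swy.PosDef) (hwt : Swt.PosDef) (hM : M.PosSemidef)
    (hMc : M * (Sx - Ss) = 0)
    (henh : (Ss + Swt)⁻¹ = (Ss + Swy)⁻¹ + M) :
    (Sx + Swt) * (Ss + Swt)⁻¹ = (Sx + Swy) * (Ss + Swy)⁻¹ :=
  rate_preservation_identity_general Sx Ss Swy Swt M hSs hle hwy hwt hM hMc henh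
end

section
/- Under the hypotheses of the rate-preservation identity (M ⪰ 0, M(Σ_x − Σ*) = 0, (Σ* + Σ_w̃)⁻¹ = (Σ* + Σ_wy)⁻¹ + M, with 0 ≺ Σ* ⪯ Σ_x, Σ_wy, Σ_w̃ ≻ 0), the determinant ratios agree: det(Σ_x + Σ_w̃)/det(Σ* + Σ_w̃) = det(Σ_x + Σ_wy)/det(Σ* + Σ_wy). -/
/-! With `D = Σ_x - Σ*`, the ratio `det (A + D) / det A` equals `det (1 + A⁻¹ D)`, so it depends on
`A` only through `A⁻¹ D`. Since `M D = 0`, the hypothesis on inverses gives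
`(Σ* + Σ_w̃)⁻¹ D = (Σ* + Σ_wy)⁻¹ D`, so the two ratios coincide. -/

open Matrix

theorem Matrix.det_add_div_det {K ι : Type*} [Field K] [Fintype ι] [DecidableEq ι]
    {A : Matrix ι ι K} (D : Matrix ι ι K) (hA : IsUnit A.det) :
    (A + D).det / A.det = (1 + A⁻¹ * D).det := by
  rw [div_eq_iff hA.ne_zero, mul_comm, ← det_mul, mul_add, mul_one,
    mul_nonsing_inv_cancel_left _ _ hA]

theorem Matrix.det_add_div_det_eq_of_inv_mul_eq {K ι : Type*} [Field K] [Fintype ι]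
    [DecidableEq ι] {A B D : Matrix ι ι K} (hA : IsUnit A.det) (hB : IsUnit B.det)
    (h : B⁻¹ * D = A⁻¹ * D) :
    (B + D).det / B.det = (A + D).det / A.det := by
  rw [det_add_div_det D hB, h, det_add_div_det D hA]

theorem rate_preservation_det_ratio_general {n : ℕ}
    (Sx Ss Swy Swt M : Matrix (Fin n) (Fin n) ℝ)
    (hSs : Ss.PosDef)
    (hwy : Swy.PosDef) (hwt : Swt.PosDef)
    (hMc : M * (Sx - Ss) = 0)
    (henh : (Ss + Swt)⁻¹ = (Ss + Swy)⁻¹ + M) :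
    (Sx + Swt).det / (Ss + Swt).det = (Sx + Swy).det / (Ss + Swy).det := by
  have hinv : (Ss + Swt)⁻¹ * (Sx - Ss) = (Ss + Swy)⁻¹ * (Sx - Ss) := by
    rw [henh, add_mul, hMc, add_zero]
  have hratio := det_add_div_det_eq_of_inv_mul_eq
    ((isUnit_iff_isUnit_det _).mp (hSs.add hwy).isUnit)
    ((isUnit_iff_isUnit_det _).mp (hSs.add hwt).isUnit) hinv
  have hshift (W : Matrix (Fin n) (Fin n) ℝ) : Ss + W + (Sx - Ss) = Sx + W := by abel
  rwa [hshift, hshift] at hratio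

theorem rate_preservation_det_ratio {n : ℕ}
    (Sx Ss Swy Swt M : Matrix (Fin n) (Fin n) ℝ)
    (hSx : Sx.PosDef) (hSs : Ss.PosDef) (hle : (Sx - Ss).PosSemidef)
    (hwy : Swy.PosDef) (hwt : Swt.PosDef) (hM : M.PosSemidef)
    (hMc : M * (Sx - Ss) = 0)
    (henh : (Ss + Swt)⁻¹ = (Ss + Swy)⁻¹ + M) :
    (Sx + Swt).det / (Ss + Swt).det = (Sx + Swy).det / (Ss + Swy).det :=
  rate_preservation_det_ratio_general Sx Ss Swy Swt M hSs hwy hwt hMc henh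
end

section
/- Let U, V, X, Y, Z be random variables with the Markov chain (U,V) − X − (Y,Z) and additionally X − Z̄ − Z for some Z̄ with (U,V) − X − (Y, Z̄, Z). Then I(U;Z̄|V) − I(U;Z|V) ≤ I(X;Z̄) − I(X;Z). -/
open Finset

/-- Probability mass of the event `f = a` under the weight function `p` on a
finite sample space. -/
noncomputable def pmfOf {Ω α : Type*} [Fintype Ω] [DecidableEq α]
    (p : Ω → ℝ) (f : Ω → α) (a : α) : ℝ :=
  ∑ ω ∈ univ.filter (fun ω => f ω = a), p ω

/-- Shannon entropy (natural log) of a finite-valued random variable. -/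
noncomputable def entropy {Ω α : Type*} [Fintype Ω] [Fintype α] [DecidableEq α]
    (p : Ω → ℝ) (f : Ω → α) : ℝ :=
  -∑ a, pmfOf p f a * Real.log (pmfOf p f a)

/-- Mutual information `I(f;g)`. -/
noncomputable def mutInfo {Ω α β : Type*} [Fintype Ω] [Fintype α] [DecidableEq α]
    [Fintype β] [DecidableEq β] (p : Ω → ℝ) (f : Ω → α) (g : Ω → β) : ℝ :=
  entropy p f + entropy p g - entropy p (fun ω => (f ω, g ω))

/-- Conditional mutual information `I(f;g|h)`. -/
noncomputable def condMutInfo {Ω α β γ : Type*} [Fintype Ω] [Fintype α] [DecidableEq α]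
    [Fintype β] [DecidableEq β] [Fintype γ] [DecidableEq γ]
    (p : Ω → ℝ) (f : Ω → α) (g : Ω → β) (h : Ω → γ) : ℝ :=
  entropy p (fun ω => (f ω, h ω)) + entropy p (fun ω => (g ω, h ω)) -
    entropy p (fun ω => (f ω, g ω, h ω)) - entropy p h

/-- Markov chain `f - g - h`: conditional independence of `f` and `h` given `g`. -/
def Markov {Ω α β γ : Type*} [Fintype Ω] [DecidableEq α] [DecidableEq β] [DecidableEq γ]
    (p : Ω → ℝ) (f : Ω → α) (g : Ω → β) (h : Ω → γ) : Prop :=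
  ∀ a b c,
    pmfOf p (fun ω => (f ω, g ω, h ω)) (a, b, c) * pmfOf p g b =
      pmfOf p (fun ω => (f ω, g ω)) (a, b) * pmfOf p (fun ω => (g ω, h ω)) (b, c)

/-!
Write `W = (U, V)`. Comparing the two chain-rule expansions of `I(U; Z̄, Z | V)` gives
`I(U;Z̄|V) - I(U;Z|V) = I(U;Z̄|Z,V) - I(U;Z|Z̄,V) ≤ I(U;Z̄|Z,V) ≤ I(W;Z̄|Z)`. The chain
`W - X - (Y, Z̄, Z)` forces `I(W;Z̄|X,Z) = 0`, so conditional data processing gives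
`I(W;Z̄|Z) ≤ I(X;Z̄|Z)`, and the same expansion of `I(X; Z̄, Z)` together with `I(X;Z|Z̄) = 0`
(the chain `X - Z̄ - Z`) identifies `I(X;Z̄|Z)` with `I(X;Z̄) - I(X;Z)`. Nonnegativity of
conditional mutual information is Gibbs' inequality.
-/

open Real

theorem sum_mul_log_sub_log_nonneg {ι : Type*} [Fintype ι] {q r : ι → ℝ}
    (hq : ∀ i, 0 ≤ q i) (hr : ∀ i, 0 ≤ r i) (hqr : ∀ i, 0 < q i → 0 < r i)
    (hsum : ∑ i, r i ≤ ∑ i, q i) :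
    0 ≤ ∑ i, q i * (log (q i) - log (r i)) := by
  have pointwise : ∀ i, q i - r i ≤ q i * (log (q i) - log (r i)) := by
    intro i
    rcases (hq i).eq_or_lt with hq0 | hqpos
    · simpa [← hq0] using hr i
    · have hrpos := hqr i hqpos
      have hlog := log_le_sub_one_of_pos (div_pos hrpos hqpos)
      rw [log_div hrpos.ne' hqpos.ne'] at hlog
      have := mul_le_mul_of_nonneg_left hlog hqpos.le
      rw [mul_sub, mul_sub, mul_div_cancel₀ _ hqpos.ne', mul_one] at this
      linarith
  calc 0 ≤ ∑ i, (q i - r i) := by rw [sum_sub_distrib]; linarith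
    _ ≤ _ := sum_le_sum fun i _ => pointwise i

section Distribution

variable {Ω α β : Type*} [Fintype Ω] {p : Ω → ℝ} [DecidableEq α] [DecidableEq β]

theorem pmfOf_nonneg (hp : ∀ ω, 0 ≤ p ω) (f : Ω → α) (a : α) : 0 ≤ pmfOf p f a :=
  sum_nonneg fun ω _ => hp ω

theorem pmfOf_congr {f : Ω → α} {g : Ω → β} {a : α} {b : β} (h : ∀ ω, f ω = a ↔ g ω = b) :
    pmfOf p f a = pmfOf p g b := by
  simp only [pmfOf, h]

theorem pmfOf_mono (hp : ∀ ω, 0 ≤ p ω) {f : Ω → α} {g : Ω → β} {a : α} {b : β}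
    (h : ∀ ω, f ω = a → g ω = b) : pmfOf p f a ≤ pmfOf p g b :=
  sum_le_sum_of_subset_of_nonneg (fun ω hω => by simp_all) fun ω _ _ => hp ω

theorem pmfOf_self_pos (hp : ∀ ω, 0 ≤ p ω) {ω : Ω} (hω : 0 < p ω) (f : Ω → α) :
    0 < pmfOf p f (f ω) :=
  hω.trans_le (single_le_sum (fun ω _ => hp ω) (by simp))

theorem sum_pmfOf_mul [Fintype α] (f : Ω → α) (F : α → ℝ) :
    ∑ a, pmfOf p f a * F a = ∑ ω, p ω * F (f ω) := by
  simp only [pmfOf, sum_mul]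
  rw [← sum_fiberwise univ f fun ω => p ω * F (f ω)]
  exact sum_congr rfl fun a _ => sum_congr rfl fun ω hω => by rw [(mem_filter.1 hω).2]

theorem sum_pmfOf [Fintype α] (f : Ω → α) : ∑ a, pmfOf p f a = ∑ ω, p ω := by
  simpa using sum_pmfOf_mul (p := p) f 1

theorem sum_pmfOf_prod_fst [Fintype α] (f : Ω → α) (g : Ω → β) (b : β) :
    ∑ a, pmfOf p (fun ω => (f ω, g ω)) (a, b) = pmfOf p g b := by
  rw [pmfOf, ← sum_fiberwise _ f p]
  refine sum_congr rfl fun a _ => ?_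
  rw [pmfOf, filter_filter]
  simp only [Prod.mk.injEq, and_comm]

end Distribution

section Information

variable {Ω α β γ δ : Type*} [Fintype Ω] {p : Ω → ℝ}
  [Fintype α] [DecidableEq α] [Fintype β] [DecidableEq β] [Fintype γ] [DecidableEq γ]
  [Fintype δ] [DecidableEq δ]

theorem entropy_eq_sum (f : Ω → α) : entropy p f = -∑ ω, p ω * log (pmfOf p f (f ω)) := by
  rw [entropy, sum_pmfOf_mul]

theorem entropy_congr {f : Ω → α} {g : Ω → β} (h : ∀ ω ω', f ω = f ω' ↔ g ω = g ω') :
    entropy p f = entropy p g := by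
  simp only [entropy_eq_sum, pmfOf_congr fun ω' => h ω' _]

theorem condMutInfo_eq_sum (f : Ω → α) (g : Ω → β) (h : Ω → γ) :
    condMutInfo p f g h = ∑ ω, p ω *
      (log (pmfOf p (fun ω => (f ω, g ω, h ω)) (f ω, g ω, h ω)) + log (pmfOf p h (h ω))
        - log (pmfOf p (fun ω => (f ω, h ω)) (f ω, h ω))
        - log (pmfOf p (fun ω => (g ω, h ω)) (g ω, h ω))) := by
  simp only [condMutInfo, entropy_eq_sum, mul_add, mul_sub, sum_add_distrib, sum_sub_distrib]
  ring

theorem condMutInfo_nonneg (hp : ∀ ω, 0 ≤ p ω) (f : Ω → α) (g : Ω → β) (h : Ω → γ) :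
    0 ≤ condMutInfo p f g h := by
  set q : α × β × γ → ℝ := pmfOf p (fun ω => (f ω, g ω, h ω))
  -- the law under which `f` and `g` are conditionally independent given `h`
  set r : α × β × γ → ℝ := fun t => pmfOf p (fun ω => (f ω, h ω)) (t.1, t.2.2) *
    pmfOf p (fun ω => (g ω, h ω)) (t.2.1, t.2.2) / pmfOf p h t.2.2
  have hcmi : condMutInfo p f g h = ∑ t, q t * (log (q t) - log (r t)) := by
    rw [sum_pmfOf_mul, condMutInfo_eq_sum]
    refine sum_congr rfl fun ω _ => ?_
    rcases (hp ω).eq_or_lt with hp0 | hpos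
    · simp [← hp0]
    · have hfh := pmfOf_self_pos hp hpos fun ω => (f ω, h ω)
      have hgh := pmfOf_self_pos hp hpos fun ω => (g ω, h ω)
      have hh := pmfOf_self_pos hp hpos h
      rw [log_div (mul_pos hfh hgh).ne' hh.ne', log_mul hfh.ne' hgh.ne']
      ring
  have hpos : ∀ t, 0 < q t → 0 < r t := by
    rintro ⟨a, b, c⟩ hq
    have hfh : q (a, b, c) ≤ pmfOf p (fun ω => (f ω, h ω)) (a, c) :=
      pmfOf_mono hp fun ω => by simp only [Prod.mk.injEq]; tauto
    have hgh : q (a, b, c) ≤ pmfOf p (fun ω => (g ω, h ω)) (b, c) :=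
      pmfOf_mono hp fun ω => by simp only [Prod.mk.injEq]; tauto
    have hh : q (a, b, c) ≤ pmfOf p h c :=
      pmfOf_mono hp fun ω => by simp only [Prod.mk.injEq]; tauto
    exact div_pos (mul_pos (hq.trans_le hfh) (hq.trans_le hgh)) (hq.trans_le hh)
  have hsum : ∑ t, r t = ∑ t, q t := by
    have hc : ∀ c, ∑ a, ∑ b, r (a, b, c) = pmfOf p h c := fun c => by
      simp only [r, ← sum_div, ← sum_mul_sum, sum_pmfOf_prod_fst, mul_self_div_self]
    calc ∑ t, r t = ∑ c, ∑ a, ∑ b, r (a, b, c) := by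
          simp only [Fintype.sum_prod_type]
          exact (sum_congr rfl fun a _ => sum_comm).trans sum_comm
      _ = ∑ t, q t := by simp only [hc, q, sum_pmfOf]
  rw [hcmi]
  exact sum_mul_log_sub_log_nonneg (fun _ => pmfOf_nonneg hp _ _)
    (fun _ => div_nonneg (mul_nonneg (pmfOf_nonneg hp _ _) (pmfOf_nonneg hp _ _))
      (pmfOf_nonneg hp _ _)) hpos hsum.le

theorem condMutInfo_eq_zero_of_markov (hp : ∀ ω, 0 ≤ p ω) {f : Ω → α} {g : Ω → β}
    {h : Ω → γ} (hM : Markov p f h g) : condMutInfo p f g h = 0 := by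
  rw [condMutInfo_eq_sum]
  refine sum_eq_zero fun ω _ => ?_
  rcases (hp ω).eq_or_lt with hp0 | hpos
  · rw [← hp0, zero_mul]
  have hfgh := pmfOf_self_pos hp hpos fun ω => (f ω, g ω, h ω)
  have hfh := pmfOf_self_pos hp hpos fun ω => (f ω, h ω)
  have hgh := pmfOf_self_pos hp hpos fun ω => (g ω, h ω)
  have hh := pmfOf_self_pos hp hpos h
  have key := hM (f ω) (h ω) (g ω)
  rw [pmfOf_congr (f := fun ω => (f ω, h ω, g ω)) (g := fun ω => (f ω, g ω, h ω))
      (b := (f ω, g ω, h ω)) fun _ => by simp only [Prod.mk.injEq]; tauto,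
    pmfOf_congr (f := fun ω => (h ω, g ω)) (g := fun ω => (g ω, h ω)) (b := (g ω, h ω))
      fun _ => by simp only [Prod.mk.injEq]; tauto] at key
  have hlog := congrArg log key
  rw [log_mul hfgh.ne' hh.ne', log_mul hfh.ne' hgh.ne'] at hlog
  rw [hlog]
  ring

theorem condMutInfo_comm (f : Ω → α) (g : Ω → β) (h : Ω → γ) :
    condMutInfo p f g h = condMutInfo p g f h := by
  rw [condMutInfo, condMutInfo, entropy_congr (f := fun ω => (f ω, g ω, h ω))
    (g := fun ω => (g ω, f ω, h ω)) fun _ _ => by simp only [Prod.mk.injEq]; tauto]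
  ring

theorem condMutInfo_prod_right (f : Ω → α) (g : Ω → β) (h : Ω → γ) (k : Ω → δ) :
    condMutInfo p f (fun ω => (g ω, h ω)) k =
      condMutInfo p f h k + condMutInfo p f g (fun ω => (k ω, h ω)) := by
  rw [condMutInfo, condMutInfo, condMutInfo,
    entropy_congr (f := fun ω => (f ω, k ω, h ω)) (g := fun ω => (f ω, h ω, k ω))
      fun _ _ => by simp only [Prod.mk.injEq]; tauto,
    entropy_congr (f := fun ω => (k ω, h ω)) (g := fun ω => (h ω, k ω))
      fun _ _ => by simp only [Prod.mk.injEq]; tauto,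
    entropy_congr (f := fun ω => ((g ω, h ω), k ω)) (g := fun ω => (g ω, k ω, h ω))
      fun _ _ => by simp only [Prod.mk.injEq]; tauto,
    entropy_congr (f := fun ω => (f ω, (g ω, h ω), k ω)) (g := fun ω => (f ω, g ω, k ω, h ω))
      fun _ _ => by simp only [Prod.mk.injEq]; tauto]
  ring

theorem condMutInfo_sub_condMutInfo (f : Ω → α) (g : Ω → β) (h : Ω → γ) (k : Ω → δ) :
    condMutInfo p f g k - condMutInfo p f h k =
      condMutInfo p f g (fun ω => (h ω, k ω)) - condMutInfo p f h (fun ω => (g ω, k ω)) := by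
  rw [condMutInfo, condMutInfo, condMutInfo, condMutInfo,
    entropy_congr (f := fun ω => (h ω, g ω, k ω)) (g := fun ω => (g ω, h ω, k ω))
      fun _ _ => by simp only [Prod.mk.injEq]; tauto,
    entropy_congr (f := fun ω => (f ω, h ω, g ω, k ω)) (g := fun ω => (f ω, g ω, h ω, k ω))
      fun _ _ => by simp only [Prod.mk.injEq]; tauto]
  ring

theorem mutInfo_sub_mutInfo (f : Ω → α) (g : Ω → β) (h : Ω → γ) :
    mutInfo p f g - mutInfo p f h = condMutInfo p f g h - condMutInfo p f h g := by
  rw [mutInfo, mutInfo, condMutInfo, condMutInfo,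
    entropy_congr (f := fun ω => (h ω, g ω)) (g := fun ω => (g ω, h ω))
      fun _ _ => by simp only [Prod.mk.injEq]; tauto,
    entropy_congr (f := fun ω => (f ω, h ω, g ω)) (g := fun ω => (f ω, g ω, h ω))
      fun _ _ => by simp only [Prod.mk.injEq]; tauto]
  ring

theorem condMutInfo_le_prod_right (hp : ∀ ω, 0 ≤ p ω) (f : Ω → α) (g : Ω → β) (h : Ω → γ)
    (k : Ω → δ) : condMutInfo p f h k ≤ condMutInfo p f (fun ω => (g ω, h ω)) k := by
  rw [condMutInfo_prod_right]
  exact le_add_of_nonneg_right (condMutInfo_nonneg hp _ _ _)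

theorem condMutInfo_cond_le_prod_right (hp : ∀ ω, 0 ≤ p ω) (f : Ω → α) (g : Ω → β)
    (h : Ω → γ) (k : Ω → δ) :
    condMutInfo p f g (fun ω => (k ω, h ω)) ≤ condMutInfo p f (fun ω => (g ω, h ω)) k := by
  rw [condMutInfo_prod_right]
  exact le_add_of_nonneg_left (condMutInfo_nonneg hp _ _ _)

theorem condMutInfo_cond_le_prod_left (hp : ∀ ω, 0 ≤ p ω) (f : Ω → α) (g : Ω → β)
    (h : Ω → γ) (k : Ω → δ) :
    condMutInfo p f h (fun ω => (k ω, g ω)) ≤ condMutInfo p (fun ω => (f ω, g ω)) h k := by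
  rw [condMutInfo_comm f, condMutInfo_comm _ h]
  exact condMutInfo_cond_le_prod_right hp h f g k

theorem condMutInfo_le_of_condMutInfo_eq_zero (hp : ∀ ω, 0 ≤ p ω) {f : Ω → α} {g : Ω → β}
    {h : Ω → γ} {k : Ω → δ} (hM : condMutInfo p g h (fun ω => (f ω, k ω)) = 0) :
    condMutInfo p g h k ≤ condMutInfo p f h k := by
  have hsub := condMutInfo_sub_condMutInfo (p := p) h f g k
  rw [condMutInfo_comm h g, condMutInfo_comm h f, condMutInfo_comm h g, hM] at hsub
  linarith [condMutInfo_nonneg hp h f fun ω => (g ω, k ω)]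

end Information

theorem cond_mutual_info_difference_bound_general
    {Ω 𝒰 𝒱 𝒳 𝒴 𝒵 𝒵' : Type*} [Fintype Ω]
    [Fintype 𝒰] [DecidableEq 𝒰] [Fintype 𝒱] [DecidableEq 𝒱]
    [Fintype 𝒳] [DecidableEq 𝒳] [Fintype 𝒴] [DecidableEq 𝒴]
    [Fintype 𝒵] [DecidableEq 𝒵] [Fintype 𝒵'] [DecidableEq 𝒵']
    (p : Ω → ℝ) (hp : ∀ ω, 0 ≤ p ω)
    (U : Ω → 𝒰) (V : Ω → 𝒱) (X : Ω → 𝒳) (Y : Ω → 𝒴)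
    (Zbar : Ω → 𝒵') (Z : Ω → 𝒵)
    (hUVX : Markov p (fun ω => (U ω, V ω)) X (fun ω => (Y ω, Zbar ω, Z ω)))
    (hXZ : Markov p X Zbar Z) :
    condMutInfo p U Zbar V - condMutInfo p U Z V ≤ mutInfo p X Zbar - mutInfo p X Z := by
  have hUV : condMutInfo p (fun ω => (U ω, V ω)) Zbar (fun ω => (X ω, Z ω)) = 0 := by
    refine le_antisymm ?_ (condMutInfo_nonneg hp _ _ _)
    calc _ ≤ condMutInfo p (fun ω => (U ω, V ω)) (fun ω => (Zbar ω, Z ω)) X :=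
          condMutInfo_cond_le_prod_right hp _ _ _ _
      _ ≤ condMutInfo p (fun ω => (U ω, V ω)) (fun ω => (Y ω, Zbar ω, Z ω)) X :=
          condMutInfo_le_prod_right hp _ Y _ _
      _ = 0 := condMutInfo_eq_zero_of_markov hp hUVX
  calc condMutInfo p U Zbar V - condMutInfo p U Z V
      = condMutInfo p U Zbar (fun ω => (Z ω, V ω)) -
          condMutInfo p U Z (fun ω => (Zbar ω, V ω)) := condMutInfo_sub_condMutInfo _ _ _ _
    _ ≤ condMutInfo p U Zbar (fun ω => (Z ω, V ω)) := sub_le_self _ (condMutInfo_nonneg hp _ _ _)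
    _ ≤ condMutInfo p (fun ω => (U ω, V ω)) Zbar Z := condMutInfo_cond_le_prod_left hp _ _ _ _
    _ ≤ condMutInfo p X Zbar Z := condMutInfo_le_of_condMutInfo_eq_zero hp hUV
    _ = mutInfo p X Zbar - mutInfo p X Z := by
      rw [mutInfo_sub_mutInfo, condMutInfo_eq_zero_of_markov hp hXZ, sub_zero]

theorem cond_mutual_info_difference_bound
    {Ω 𝒰 𝒱 𝒳 𝒴 𝒵 𝒵' : Type*} [Fintype Ω]
    [Fintype 𝒰] [DecidableEq 𝒰] [Fintype 𝒱] [DecidableEq 𝒱]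
    [Fintype 𝒳] [DecidableEq 𝒳] [Fintype 𝒴] [DecidableEq 𝒴]
    [Fintype 𝒵] [DecidableEq 𝒵] [Fintype 𝒵'] [DecidableEq 𝒵']
    (p : Ω → ℝ) (hp : ∀ ω, 0 ≤ p ω) (hp1 : ∑ ω, p ω = 1)
    (U : Ω → 𝒰) (V : Ω → 𝒱) (X : Ω → 𝒳) (Y : Ω → 𝒴)
    (Zbar : Ω → 𝒵') (Z : Ω → 𝒵)
    (hUVX : Markov p (fun ω => (U ω, V ω)) X (fun ω => (Y ω, Zbar ω, Z ω)))
    (hXZ : Markov p X Zbar Z) :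
    condMutInfo p U Zbar V - condMutInfo p U Z V ≤ mutInfo p X Zbar - mutInfo p X Z :=
  cond_mutual_info_difference_bound_general p hp U V X Y Zbar Z hUVX hXZ
end

section
/- Let Σ_x ≻ 0 (n×n), B an m_y×n matrix, E an m_z×n matrix, and let φ₁ ≥ … ≥ φ_n be the generalized eigenvalues of the pair (Σ_x^{1/2} Bᵀ B Σ_x^{1/2} + I, Σ_x^{1/2} Eᵀ E Σ_x^{1/2} + I), with exactly ρ of them greater than 1. Then the supremum over 0 ⪯ Σ ⪯ Σ_x of (1/2)[log det(BΣ_xBᵀ+I) − log det(BΣBᵀ+I)] − (1/2)[log det(EΣ_xEᵀ+I) − log det(EΣEᵀ+I)] is at most (1/2) Σ_{i=1}^{ρ} log φ_i. -/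
/-!
Write `P = Σx^{1/2}`, `A = P BᵀB P + 1`, `C = P EᵀE P + 1` and `S = P K² P` with `K` symmetric and
`K² ⪯ 1`. Sylvester's identity `det (1 + XY) = det (1 + YX)` turns the four determinants into
`det A`, `det C`, `det (K A K + 1 - K²)` and `det (K C K + 1 - K²)`, and a simultaneous
diagonalisation gives `C = V Vᵀ`, `A = V Φ Vᵀ` with `Φ = diag φ`. Lowering `Φ` to
`Ψ = min Φ 1` only decreases `det (K A K + 1 - K²)`; with `N = K V` and `Z = N Nᵀ + 1 - K²` this
leaves `det (Z - N (1 - Ψ) Nᵀ) ≥ det Ψ · det Z`, which holds because `Z ⪰ N Nᵀ` forces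
`Nᵀ Z⁻¹ N ⪯ 1` (a Schur complement argument). Taking logarithms, `log det A - log det C = Σ log φᵢ`
and `Σ log φᵢ - Σ log ψᵢ = Σ_{φᵢ > 1} log φᵢ`.
-/

open Matrix Finset

noncomputable def Matrix.PosSemidef.sqrt {n 𝕜 : Type*} [Fintype n] [DecidableEq n] [RCLike 𝕜]
    [PartialOrder 𝕜] {A : Matrix n n 𝕜} (hA : A.PosSemidef) : Matrix n n 𝕜 :=
  hA.isHermitian.eigenvectorUnitary.1 * diagonal ((↑) ∘ (Real.sqrt) ∘ hA.isHermitian.eigenvalues) *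
  (star hA.isHermitian.eigenvectorUnitary : Matrix n n 𝕜)

lemma sum_log_sub_sum_log_min_one {ι : Type*} (s : Finset ι) (φ : ι → ℝ) :
    ∑ i ∈ s, Real.log (φ i) - ∑ i ∈ s, Real.log (min (φ i) 1) =
      ∑ i ∈ s.filter (fun i => 1 < φ i), Real.log (φ i) := by
  rw [← sum_sub_distrib, sum_filter]
  refine sum_congr rfl fun i _ => ?_
  split_ifs with h
  · rw [min_eq_right h.le, Real.log_one, sub_zero]
  · rw [min_eq_left (not_lt.mp h), sub_self]

namespace Matrix

variable {m k : Type*} [Fintype m] [DecidableEq m] [Fintype k]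

namespace PosSemidef

variable {A : Matrix m m ℝ}

lemma posSemidef_sqrt (hA : A.PosSemidef) : hA.sqrt.PosSemidef := by
  have hd : (diagonal ((↑) ∘ Real.sqrt ∘ hA.isHermitian.eigenvalues : m → ℝ)).PosSemidef :=
    PosSemidef.diagonal fun i => Real.sqrt_nonneg _
  unfold PosSemidef.sqrt
  rw [star_eq_conjTranspose]
  exact hd.mul_mul_conjTranspose_same _

lemma transpose_sqrt (hA : A.PosSemidef) : hA.sqrtᵀ = hA.sqrt := by
  rw [← conjTranspose_eq_transpose_of_trivial, hA.posSemidef_sqrt.isHermitian.eq]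

lemma sqrt_mul_self (hA : A.PosSemidef) : hA.sqrt * hA.sqrt = A := by
  unfold PosSemidef.sqrt
  set U : Matrix m m ℝ := (hA.isHermitian.eigenvectorUnitary : Matrix m m ℝ)
  have hU : star U * U = 1 := Unitary.coe_star_mul_self _
  conv_rhs => rw [hA.isHermitian.spectral_theorem, Unitary.conjStarAlgAut_apply]
  calc U * diagonal (RCLike.ofReal ∘ Real.sqrt ∘ hA.isHermitian.eigenvalues) * star U *
        (U * diagonal (RCLike.ofReal ∘ Real.sqrt ∘ hA.isHermitian.eigenvalues) * star U)
      = U * (diagonal (RCLike.ofReal ∘ Real.sqrt ∘ hA.isHermitian.eigenvalues) *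
        diagonal (RCLike.ofReal ∘ Real.sqrt ∘ hA.isHermitian.eigenvalues)) * star U := by
        simp only [Matrix.mul_assoc, ← Matrix.mul_assoc (star U), hU, Matrix.one_mul]
    _ = _ := by
        rw [diagonal_mul_diagonal]
        congr 3
        funext i
        simp [Real.mul_self_sqrt (hA.eigenvalues_nonneg i)]

lemma isUnit_sqrt (hA : A.PosSemidef) (h : IsUnit A) : IsUnit hA.sqrt :=
  isUnit_of_mul_isUnit_left (hA.sqrt_mul_self ▸ h)

lemma one_le_det_one_add {Ψ : Matrix m m ℝ} (hΨ : Ψ.PosSemidef) : 1 ≤ (1 + Ψ).det := by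
  set U : Matrix m m ℝ := (hΨ.isHermitian.eigenvectorUnitary : Matrix m m ℝ)
  have hU : U * star U = 1 := Unitary.coe_mul_star_self _
  have hΨU : 1 + Ψ = U * diagonal (1 + hΨ.isHermitian.eigenvalues) * star U := by
    have hd : diagonal (1 + hΨ.isHermitian.eigenvalues) =
        1 + diagonal (RCLike.ofReal ∘ hΨ.isHermitian.eigenvalues) := by
      rw [← diagonal_one, diagonal_add]; rfl
    rw [hd, Matrix.mul_add, Matrix.add_mul, Matrix.mul_one, hU]
    conv_lhs => rw [hΨ.isHermitian.spectral_theorem, Unitary.conjStarAlgAut_apply]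
  rw [hΨU, det_mul, det_mul, mul_right_comm, ← det_mul, hU, det_one, one_mul, det_diagonal]
  exact Finset.one_le_prod fun i _ => le_add_of_nonneg_right (hΨ.eigenvalues_nonneg i)

lemma det_le_det_add {X Δ : Matrix m m ℝ} (hX : X.PosSemidef) (hΔ : Δ.PosSemidef) :
    X.det ≤ (X + Δ).det := by
  by_cases hXpd : X.PosDef
  · set W := hX.sqrt
    have hWdet : IsUnit W.det := (isUnit_iff_isUnit_det W).mp (hX.isUnit_sqrt hXpd.isUnit)
    have hWinv : W⁻¹ᴴ = W⁻¹ := by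
      rw [conjTranspose_nonsing_inv, hX.posSemidef_sqrt.isHermitian.eq]
    have hXΔ : X + Δ = W * (1 + W⁻¹ * Δ * W⁻¹) * W := by
      rw [Matrix.mul_add, Matrix.add_mul, Matrix.mul_one, hX.sqrt_mul_self, Matrix.mul_assoc,
        Matrix.mul_assoc, Matrix.nonsing_inv_mul _ hWdet, Matrix.mul_one, ← Matrix.mul_assoc,
        Matrix.mul_nonsing_inv _ hWdet, Matrix.one_mul]
    have h1 := (hWinv ▸ hΔ.mul_mul_conjTranspose_same W⁻¹).one_le_det_one_add
    rw [hXΔ, det_mul, det_mul, mul_right_comm, ← det_mul, hX.sqrt_mul_self]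
    exact le_mul_of_one_le_right hX.det_nonneg h1
  · rw [hX.posDef_iff_det_ne_zero, not_not] at hXpd
    exact hXpd ▸ (hX.add hΔ).det_nonneg

end PosSemidef

lemma PosDef.posSemidef_one_sub_transpose_mul_inv_mul {Z : Matrix m m ℝ} (hZ : Z.PosDef)
    [DecidableEq k] {N : Matrix m k ℝ} (hN : (Z - N * Nᵀ).PosSemidef) :
    (1 - Nᵀ * Z⁻¹ * N).PosSemidef := by
  have : Invertible Z := hZ.isUnit.invertible
  have : Invertible (1 : Matrix k k ℝ) := invertibleOne
  have hblock : (fromBlocks Z N Nᴴ 1).PosSemidef :=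
    (PosDef.fromBlocks₂₂ Z N PosDef.one).mpr (by simpa using hN)
  simpa using (PosDef.fromBlocks₁₁ N 1 hZ).mp hblock

lemma prod_one_sub_mul_det_le_det_sub {Z : Matrix m m ℝ} (hZ : Z.PosDef) [DecidableEq k]
    {N : Matrix m k ℝ} (hN : (Z - N * Nᵀ).PosSemidef) {δ : k → ℝ} (hδ0 : 0 ≤ δ) (hδ1 : δ ≤ 1) :
    (∏ i, (1 - δ i)) * Z.det ≤ (Z - N * diagonal δ * Nᵀ).det := by
  set D := diagonal (Real.sqrt ∘ δ)
  have hDD : D * D = diagonal δ := by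
    rw [diagonal_mul_diagonal]
    congr 1
    funext i
    exact Real.mul_self_sqrt (hδ0 i)
  have hZu : IsUnit Z.det := (isUnit_iff_isUnit_det Z).mp hZ.isUnit
  have hfactor : Z - N * diagonal δ * Nᵀ = Z * (1 - (Z⁻¹ * N * D) * (D * Nᵀ)) := by
    rw [Matrix.mul_sub, Matrix.mul_one, ← hDD]
    simp only [← Matrix.mul_assoc, Matrix.mul_nonsing_inv _ hZu, Matrix.one_mul]
  have hsylv : 1 - D * Nᵀ * (Z⁻¹ * N * D) =
      diagonal (1 - δ) + D * (1 - Nᵀ * Z⁻¹ * N) * D := by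
    have hdiag : (1 : Matrix k k ℝ) - diagonal δ = diagonal (1 - δ) := by
      rw [← diagonal_one, diagonal_sub]; rfl
    rw [← hdiag, ← hDD, Matrix.mul_sub, Matrix.sub_mul, Matrix.mul_one]
    simp only [Matrix.mul_assoc]
    abel
  have hcontr := (hZ.posSemidef_one_sub_transpose_mul_inv_mul hN).mul_mul_conjTranspose_same D
  rw [diagonal_conjTranspose, star_trivial] at hcontr
  rw [hfactor, det_mul, det_one_sub_mul_comm, hsylv, mul_comm, ← det_diagonal]
  exact mul_le_mul_of_nonneg_left
    ((PosSemidef.diagonal (sub_nonneg.mpr hδ1)).det_le_det_add hcontr) hZ.det_pos.le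

lemma prod_min_one_mul_det_le_det_add {Z : Matrix m m ℝ} (hZ : Z.PosDef) [DecidableEq k]
    {N : Matrix m k ℝ} (hN : (Z - N * Nᵀ).PosSemidef) {d : k → ℝ} (hd : 0 ≤ d) :
    (∏ i, min (d i) 1) * Z.det ≤ (Z + N * diagonal (d - 1) * Nᵀ).det := by
  set ψ : k → ℝ := d ⊓ 1
  have hψ0 : 0 ≤ ψ := le_inf hd zero_le_one
  have hdiag_sub : ∀ a b : k → ℝ, diagonal (a - b) = diagonal a - diagonal b :=
    fun a b => (diagonal_sub a b).symm
  have hsplit : Z + N * diagonal (d - 1) * Nᵀ =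
      (Z - N * diagonal (1 - ψ) * Nᵀ) + N * diagonal (d - ψ) * Nᵀ := by
    rw [show d - 1 = (d - ψ) - (1 - ψ) by abel, hdiag_sub, Matrix.mul_sub, Matrix.sub_mul]
    abel
  have hbase : Z - N * diagonal (1 - ψ) * Nᵀ = (Z - N * Nᵀ) + N * diagonal ψ * Nᵀ := by
    rw [hdiag_sub, Pi.one_def, diagonal_one, Matrix.mul_sub, Matrix.sub_mul, Matrix.mul_one]
    abel
  have hpsd : ∀ e : k → ℝ, 0 ≤ e → (N * diagonal e * Nᵀ).PosSemidef := fun e he => by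
    simpa using (PosSemidef.diagonal he).mul_mul_conjTranspose_same N
  have hmain := prod_one_sub_mul_det_le_det_sub hZ hN (sub_nonneg.mpr inf_le_right)
    (sub_le_self _ hψ0)
  simp only [Pi.sub_apply, Pi.one_apply, sub_sub_cancel] at hmain
  rw [hsplit]
  exact hmain.trans (PosSemidef.det_le_det_add (hbase ▸ hN.add (hpsd ψ hψ0))
    (hpsd _ (sub_nonneg.mpr inf_le_left)))

lemma log_det_sub_log_det_le_sum_log {V K : Matrix m m ℝ} {φ : m → ℝ} (hφ : ∀ i, 0 < φ i)
    (hV : (V * Vᵀ - 1).PosSemidef) (hK : Kᵀ = K) (hK1 : (1 - K * K).PosSemidef) :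
    Real.log (V * diagonal φ * Vᵀ).det -
        Real.log (K * (V * diagonal φ * Vᵀ) * K + (1 - K * K)).det -
      (Real.log (V * Vᵀ).det - Real.log (K * (V * Vᵀ) * K + (1 - K * K)).det) ≤
      ∑ i ∈ univ.filter (fun i => 1 < φ i), Real.log (φ i) := by
  set Z := K * (V * Vᵀ) * K + (1 - K * K)
  have hZ : Z.PosDef := by
    have hZ1 : Z = 1 + K * (V * Vᵀ - 1) * K := by
      simp only [Z, Matrix.mul_sub, Matrix.sub_mul, Matrix.mul_one]; abel
    simpa [hZ1, hK] using PosDef.one.add_posSemidef (hV.mul_mul_conjTranspose_same K)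
  have hZN : (Z - (K * V) * (K * V)ᵀ).PosSemidef := by
    rw [transpose_mul, hK]
    convert hK1 using 1
    simp only [Z, Matrix.mul_assoc]
    abel
  have hsplit : K * (V * diagonal φ * Vᵀ) * K + (1 - K * K) =
      Z + (K * V) * diagonal (φ - 1) * (K * V)ᵀ := by
    have hφ1 : diagonal φ = 1 + diagonal (φ - 1) := by
      rw [← diagonal_one, diagonal_add]
      simp
    rw [transpose_mul, hK, hφ1]
    simp only [Z, Matrix.mul_add, Matrix.add_mul, Matrix.mul_one, Matrix.mul_assoc]
    abel
  have hdet := prod_min_one_mul_det_le_det_add hZ hZN (fun i => (hφ i).le)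
  rw [← hsplit] at hdet
  have hC : (V * Vᵀ).PosDef := by simpa using PosDef.one.add_posSemidef hV
  have hA : (V * diagonal φ * Vᵀ).det = (V * Vᵀ).det * ∏ i, φ i := by
    rw [det_mul, det_mul, det_mul, det_diagonal]; ring
  have hψ : 0 < ∏ i, min (φ i) 1 := prod_pos fun i _ => lt_min (hφ i) one_pos
  have hlogX := Real.log_le_log (mul_pos hψ hZ.det_pos) hdet
  rw [Real.log_mul hψ.ne' hZ.det_pos.ne', Real.log_prod fun i _ => (lt_min (hφ i) one_pos).ne']
    at hlogX
  rw [hA, Real.log_mul hC.det_pos.ne' (prod_pos fun i _ => hφ i).ne',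
    Real.log_prod fun i _ => (hφ i).ne', ← sum_log_sub_sum_log_min_one]
  linarith

lemma det_mul_conj_mul_transpose_add_one [DecidableEq k] (B : Matrix k m ℝ) (P K : Matrix m m ℝ) :
    (B * (P * (K * K) * P) * Bᵀ + 1).det = (K * (P * Bᵀ * B * P + 1) * K + (1 - K * K)).det := by
  have hfac : B * (P * (K * K) * P) * Bᵀ = (B * P * K) * (K * P * Bᵀ) := by
    simp only [Matrix.mul_assoc]
  rw [hfac, det_mul_add_one_comm]
  congr 1
  simp only [Matrix.mul_add, Matrix.add_mul, Matrix.mul_one, Matrix.mul_assoc]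
  abel

lemma PosDef.inv_mul_mul_inv {A W : Matrix m m ℝ} (hA : A.PosDef) (hW : Wᵀ = W)
    (hWu : IsUnit W) : (W⁻¹ * A * W⁻¹).PosDef := by
  have hWinv : W⁻¹ᴴ = W⁻¹ := by
    rw [conjTranspose_nonsing_inv, conjTranspose_eq_transpose_of_trivial, hW]
  simpa only [hWinv] using
    hA.mul_mul_conjTranspose_same (vecMul_injective_of_isUnit (isUnit_nonsing_inv_iff.mpr hWu))

lemma exists_eq_mul_diagonal_eigenvalues_mul_transpose {A W : Matrix m m ℝ} (hW : Wᵀ = W)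
    (hWu : IsUnit W) (hG : (W⁻¹ * A * W⁻¹).IsHermitian) :
    ∃ V : Matrix m m ℝ, A = V * diagonal hG.eigenvalues * Vᵀ ∧ W * W = V * Vᵀ := by
  set U : Matrix m m ℝ := (hG.eigenvectorUnitary : Matrix m m ℝ)
  have hU : U * Uᵀ = 1 := by
    simpa [star_eq_conjTranspose] using Unitary.coe_mul_star_self hG.eigenvectorUnitary
  set D := diagonal hG.eigenvalues
  have hspec : W⁻¹ * A * W⁻¹ = U * D * Uᵀ := by
    conv_lhs => rw [hG.spectral_theorem, Unitary.conjStarAlgAut_apply]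
    simp [U, D, star_eq_conjTranspose]
  have hWdet : IsUnit W.det := (isUnit_iff_isUnit_det W).mp hWu
  refine ⟨W * U, ?_, ?_⟩
  · calc A = W * (W⁻¹ * A * W⁻¹) * W := by
          simp only [← Matrix.mul_assoc, Matrix.mul_nonsing_inv _ hWdet, Matrix.one_mul]
          rw [Matrix.mul_assoc, Matrix.nonsing_inv_mul _ hWdet, Matrix.mul_one]
      _ = W * U * D * (W * U)ᵀ := by
          rw [hspec, transpose_mul, hW]; simp only [Matrix.mul_assoc]
  · rw [transpose_mul, hW, Matrix.mul_assoc, ← Matrix.mul_assoc U, hU, Matrix.one_mul]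

lemma exists_eq_mul_mul_self_mul_of_posSemidef_sub {P S : Matrix m m ℝ} (hP : Pᵀ = P)
    (hPu : IsUnit P) (hS : S.PosSemidef) (hPS : (P * P - S).PosSemidef) :
    ∃ K : Matrix m m ℝ, Kᵀ = K ∧ (1 - K * K).PosSemidef ∧ S = P * (K * K) * P := by
  have hPdet : IsUnit P.det := (isUnit_iff_isUnit_det P).mp hPu
  have hPinv : P⁻¹ᴴ = P⁻¹ := by
    rw [conjTranspose_nonsing_inv, conjTranspose_eq_transpose_of_trivial, hP]
  have hconj : ∀ X : Matrix m m ℝ, X.PosSemidef → (P⁻¹ * X * P⁻¹).PosSemidef := fun X hX => by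
    simpa only [hPinv] using hX.mul_mul_conjTranspose_same P⁻¹
  have hT := hconj S hS
  refine ⟨hT.sqrt, hT.transpose_sqrt, ?_, ?_⟩
  · have h1T : 1 - P⁻¹ * S * P⁻¹ = P⁻¹ * (P * P - S) * P⁻¹ := by
      rw [Matrix.mul_sub, Matrix.sub_mul, ← Matrix.mul_assoc, Matrix.nonsing_inv_mul _ hPdet,
        Matrix.one_mul, Matrix.mul_nonsing_inv _ hPdet]
    rw [hT.sqrt_mul_self, h1T]
    exact hconj _ hPS
  · rw [hT.sqrt_mul_self]
    simp only [← Matrix.mul_assoc, Matrix.mul_nonsing_inv _ hPdet, Matrix.one_mul]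
    rw [Matrix.mul_assoc, Matrix.nonsing_inv_mul _ hPdet, Matrix.mul_one]

end Matrix

/-- Upper bound on the key rate in terms of the generalized eigenvalues of the pair
`(Σx^{1/2} Bᵀ B Σx^{1/2} + I, Σx^{1/2} Eᵀ E Σx^{1/2} + I)`.  The generalized
eigenvalues of `(A, C)` with `C ≻ 0` are realized as the eigenvalues of the
Hermitian matrix `C^{-1/2} A C^{-1/2}`. -/
theorem key_rate_sup_bound {n my mz : ℕ}
    (Sx : Matrix (Fin n) (Fin n) ℝ) (hSx : Sx.PosDef)
    (B : Matrix (Fin my) (Fin n) ℝ) (E : Matrix (Fin mz) (Fin n) ℝ)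
    (hC : (hSx.posSemidef.sqrt * Eᵀ * E * hSx.posSemidef.sqrt + 1).PosSemidef)
    (hherm : (hC.sqrt⁻¹ *
        (hSx.posSemidef.sqrt * Bᵀ * B * hSx.posSemidef.sqrt + 1) * hC.sqrt⁻¹).IsHermitian)
    (φ : Fin n → ℝ) (hφ : φ = hherm.eigenvalues) :
    ∀ S : Matrix (Fin n) (Fin n) ℝ, S.PosSemidef → (Sx - S).PosSemidef →
      (1 / 2) * (Real.log (B * Sx * Bᵀ + 1).det - Real.log (B * S * Bᵀ + 1).det) -
        (1 / 2) * (Real.log (E * Sx * Eᵀ + 1).det - Real.log (E * S * Eᵀ + 1).det) ≤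
      (1 / 2) * ∑ i ∈ univ.filter (fun i => 1 < φ i), Real.log (φ i) := by
  intro S hS hSxS
  set P := hSx.posSemidef.sqrt
  set W := hC.sqrt
  have hP : Pᵀ = P := hSx.posSemidef.transpose_sqrt
  have hPP : P * P = Sx := hSx.posSemidef.sqrt_mul_self
  have hgram : ∀ {k : ℕ} (F : Matrix (Fin k) (Fin n) ℝ), (P * Fᵀ * F * P).PosSemidef := fun F => by
    simpa [hP, Matrix.mul_assoc] using posSemidef_conjTranspose_mul_self (F * P)
  have hdetSx : ∀ {k : ℕ} (F : Matrix (Fin k) (Fin n) ℝ),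
      (F * Sx * Fᵀ + 1).det = (P * Fᵀ * F * P + 1).det := fun F => by
    simpa [hPP] using det_mul_conj_mul_transpose_add_one F P 1
  have hWu : IsUnit W := hC.isUnit_sqrt (PosDef.posSemidef_add (hgram E) PosDef.one).isUnit
  have hA : (P * Bᵀ * B * P + 1).PosDef := PosDef.posSemidef_add (hgram B) PosDef.one
  have hφpos : ∀ i, 0 < φ i := hφ ▸ (hA.inv_mul_mul_inv hC.transpose_sqrt hWu).eigenvalues_pos
  obtain ⟨V, hAV, hWV⟩ : ∃ V, P * Bᵀ * B * P + 1 = V * diagonal φ * Vᵀ ∧ W * W = V * Vᵀ :=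
    hφ ▸ exists_eq_mul_diagonal_eigenvalues_mul_transpose hC.transpose_sqrt hWu hherm
  obtain ⟨K, hK, hK1, rfl⟩ :=
    exists_eq_mul_mul_self_mul_of_posSemidef_sub hP (hSx.posSemidef.isUnit_sqrt hSx.isUnit) hS
      (hPP ▸ hSxS)
  have hV : (V * Vᵀ - 1).PosSemidef := by
    rw [← hWV, hC.sqrt_mul_self, add_sub_cancel_right]
    exact hgram E
  have key := log_det_sub_log_det_le_sum_log hφpos hV hK hK1
  rw [← hAV, ← hWV, hC.sqrt_mul_self] at key
  rw [hdetSx, hdetSx, det_mul_conj_mul_transpose_add_one, det_mul_conj_mul_transpose_add_one]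
  linarith
end
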